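/- arXiv:1701.07764 — 3 statements merged into one kernel-verified Lean document; each statement's English description precedes it below -/
import Mathlib

section
/- Let 0 < q_red < 1, θ ∈ (0,1], C_stb, C_red > 0 be given. Suppose that for consecutive estimators η_ℓ, η_{ℓ+1} indexed over subsets of meshes T_ℓ, T_{ℓ+1} one has: (stability) |η_{ℓ+1}(T_ℓ ∩ T_{ℓ+1}) − η_ℓ(T_ℓ ∩ T_{ℓ+1})| ≤ C_stb ρ_ℓ, (reduction) η_{ℓ+1}(T_{ℓ+1} \ T_ℓ)² ≤ q_red η_ℓ(T_ℓ \ T_{ℓ+1})² + C_red ρ_ℓ², and (Dörfler marking) θ η_ℓ² ≤ η_ℓ(T_ℓ \ T_{ℓ+1})², where ρ_ℓ ≥ 0 and η_ℓ(S)² denotes the sum of squared indicators over S with η_ℓ² = η_ℓ(T_ℓ)². Then for every δ > 0, η_{ℓ+1}² ≤ (1+δ)(1 − (1 − q_red)θ) η_ℓ² + (C_red + (1 + δ^{-1}) C_stb²) ρ_ℓ². In particular, if δ is small enough that q_est := (1+δ)(1 − (1−q_red)θ) < 1, one obtains the estimator reduction η_{ℓ+1}² ≤ q_est η_ℓ²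 + C_est ρ_ℓ². -/
/-!
Split both estimators into their parts on the non-refined elements `T_ℓ ∩ T_{ℓ+1}` and on the
refined ones. On the non-refined part, stability and Young's inequality give
`η_{ℓ+1}(T_ℓ ∩ T_{ℓ+1})² ≤ (1+δ) η_ℓ(T_ℓ ∩ T_{ℓ+1})² + (1+δ⁻¹) C_stb² ρ²`; on the refined part the
reduction hypothesis contracts by `q_red`. The resulting bound `(1+δ)(η_ℓ² − (1−q_red) η_ℓ(T_ℓ \ T_{ℓ+1})²)`
is then turned into a contraction of the full estimator by Dörfler marking.
-/

theorem add_sq_le_one_add_mul_sq_add_one_add_inv_mul_sq {K : Type*} [Field K] [LinearOrder K]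
    [IsStrictOrderedRing K] (a b : K) {δ : K} (hδ : 0 < δ) :
    (a + b) ^ 2 ≤ (1 + δ) * a ^ 2 + (1 + δ⁻¹) * b ^ 2 := by
  have hsq : 0 ≤ δ⁻¹ * (δ * a - b) ^ 2 := by positivity
  have hexpand : δ⁻¹ * (δ * a - b) ^ 2 = δ * a ^ 2 - 2 * a * b + δ⁻¹ * b ^ 2 := by
    field_simp
    ring
  linarith

theorem Real.le_one_add_mul_add_of_sqrt_le_sqrt_add {x y c δ : ℝ} (hy : 0 ≤ y)
    (h : √x ≤ √y + c) (hδ : 0 < δ) : x ≤ (1 + δ) * y + (1 + δ⁻¹) * c ^ 2 := by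
  calc x ≤ (√y + c) ^ 2 := (Real.sqrt_le_iff.mp h).2
    _ ≤ (1 + δ) * √y ^ 2 + (1 + δ⁻¹) * c ^ 2 :=
      add_sq_le_one_add_mul_sq_add_one_add_inv_mul_sq _ _ hδ
    _ = (1 + δ) * y + (1 + δ⁻¹) * c ^ 2 := by rw [Real.sq_sqrt hy]

theorem add_mul_le_one_sub_mul_of_mul_le {B M q θ : ℝ} (hq : q ≤ 1) (hM : θ * (B + M) ≤ M) :
    B + q * M ≤ (1 - (1 - q) * θ) * (B + M) := by
  linarith [mul_le_mul_of_nonneg_left hM (sub_nonneg.mpr hq)]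

theorem estimator_reduction_of_split {A B R M q θ Cstb Cred ρ δ : ℝ}
    (hq0 : 0 ≤ q) (hq1 : q ≤ 1) (hB : 0 ≤ B) (hM : 0 ≤ M)
    (hstab : √A ≤ √B + Cstb * ρ) (hred : R ≤ q * M + Cred * ρ ^ 2)
    (hdoerfler : θ * (B + M) ≤ M) (hδ : 0 < δ) :
    A + R ≤ (1 + δ) * (1 - (1 - q) * θ) * (B + M) + (Cred + (1 + δ⁻¹) * Cstb ^ 2) * ρ ^ 2 := by
  have hA := Real.le_one_add_mul_add_of_sqrt_le_sqrt_add hB hstab hδ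
  have hcontract := mul_le_mul_of_nonneg_left
    (add_mul_le_one_sub_mul_of_mul_le hq1 hdoerfler) (by linarith : (0 : ℝ) ≤ 1 + δ)
  have hqM : q * M ≤ (1 + δ) * (q * M) := le_mul_of_one_le_left (by positivity) (by linarith)
  linarith

open Classical in
theorem estimator_reduction_general {α : Type}
    (Tl Tl1 : Finset α)                 -- the meshes `T_ℓ` and `T_{ℓ+1}`
    (ηl ηl1 : α → ℝ)                    -- the refinement indicators on each mesh
    (ρ : ℝ)                             -- the perturbation `ρ_ℓ`, e.g. `‖U_{ℓ+1}−U_ℓ‖_{H¹}`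
    (qred θ Cstb Cred : ℝ)
    (hq0 : 0 < qred) (hq1 : qred < 1)
    -- stability on non-refined elements:
    (hstab : |Real.sqrt (∑ T ∈ Tl ∩ Tl1, ηl1 T ^ 2) -
              Real.sqrt (∑ T ∈ Tl ∩ Tl1, ηl T ^ 2)| ≤ Cstb * ρ)
    -- reduction on refined elements:
    (hred : ∑ T ∈ Tl1 \ Tl, ηl1 T ^ 2 ≤
        qred * ∑ T ∈ Tl \ Tl1, ηl T ^ 2 + Cred * ρ ^ 2)
    -- Dörfler marking (marked, hence refined, elements control `θ η_ℓ²`):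
    (hdoerfler : θ * ∑ T ∈ Tl, ηl T ^ 2 ≤ ∑ T ∈ Tl \ Tl1, ηl T ^ 2) :
    ∀ δ : ℝ, 0 < δ →
      ∑ T ∈ Tl1, ηl1 T ^ 2 ≤
        (1 + δ) * (1 - (1 - qred) * θ) * ∑ T ∈ Tl, ηl T ^ 2
          + (Cred + (1 + δ⁻¹) * Cstb ^ 2) * ρ ^ 2 := by
  intro δ hδ
  have hsplit_l : ∑ T ∈ Tl, ηl T ^ 2 = ∑ T ∈ Tl ∩ Tl1, ηl T ^ 2 + ∑ T ∈ Tl \ Tl1, ηl T ^ 2 :=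
    (Finset.sum_inter_add_sum_sdiff Tl Tl1 _).symm
  have hsplit_l1 :
      ∑ T ∈ Tl1, ηl1 T ^ 2 = ∑ T ∈ Tl ∩ Tl1, ηl1 T ^ 2 + ∑ T ∈ Tl1 \ Tl, ηl1 T ^ 2 := by
    rw [Finset.inter_comm, Finset.sum_inter_add_sum_sdiff]
  rw [hsplit_l, hsplit_l1]
  rw [hsplit_l] at hdoerfler
  exact estimator_reduction_of_split hq0.le hq1.le
    (Finset.sum_nonneg fun _ _ => sq_nonneg _) (Finset.sum_nonneg fun _ _ => sq_nonneg _)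
    (sub_le_iff_le_add'.mp (abs_le.mp hstab).2) hred hdoerfler hδ

open Classical in
theorem estimator_reduction {α : Type}
    (Tl Tl1 : Finset α)                 -- the meshes `T_ℓ` and `T_{ℓ+1}`
    (ηl ηl1 : α → ℝ)                    -- the refinement indicators on each mesh
    (ρ : ℝ)                             -- the perturbation `ρ_ℓ`, e.g. `‖U_{ℓ+1}−U_ℓ‖_{H¹}`
    (qred θ Cstb Cred : ℝ)
    (hq0 : 0 < qred) (hq1 : qred < 1) (hθ0 : 0 < θ) (hθ1 : θ ≤ 1)
    (hCstb : 0 < Cstb) (hCred : 0 < Cred) (hρ : 0 ≤ ρ)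
    (hηl : ∀ T, 0 ≤ ηl T) (hηl1 : ∀ T, 0 ≤ ηl1 T)
    -- stability on non-refined elements:
    (hstab : |Real.sqrt (∑ T ∈ Tl ∩ Tl1, ηl1 T ^ 2) -
              Real.sqrt (∑ T ∈ Tl ∩ Tl1, ηl T ^ 2)| ≤ Cstb * ρ)
    -- reduction on refined elements:
    (hred : ∑ T ∈ Tl1 \ Tl, ηl1 T ^ 2 ≤
        qred * ∑ T ∈ Tl \ Tl1, ηl T ^ 2 + Cred * ρ ^ 2)
    -- Dörfler marking (marked, hence refined, elements control `θ η_ℓ²`):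
    (hdoerfler : θ * ∑ T ∈ Tl, ηl T ^ 2 ≤ ∑ T ∈ Tl \ Tl1, ηl T ^ 2) :
    ∀ δ : ℝ, 0 < δ →
      ∑ T ∈ Tl1, ηl1 T ^ 2 ≤
        (1 + δ) * (1 - (1 - qred) * θ) * ∑ T ∈ Tl, ηl T ^ 2
          + (Cred + (1 + δ⁻¹) * Cstb ^ 2) * ρ ^ 2 :=
  estimator_reduction_general Tl Tl1 ηl ηl1 ρ qred θ Cstb Cred hq0 hq1 hstab hred hdoerfler
end

section
/- Let T̂_• and T̂_∘ be hierarchical meshes with T̂_∘ finer than T̂_• (i.e., Ω̂_•^k ⊆ Ω̂_∘^k for all k ∈ ℕ₀). Then for every hierarchical B-spline β̂_∘ ∈ Ĥ_∘ there exists a hierarchical B-spline β̂_• ∈ Ĥ_• with supp(β̂_∘) ⊆ supp(β̂_•). -/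
/- Climb the chain of coarser B-splines: starting from `β ∈ B̂^k` whose support leaves `Ω^{k+1}`,
replace it by a coarser B-spline containing its support as long as the support still leaves the
current level's domain. The support keeps leaving the next domain, and since `Ω^0` is everything
the climb stops, at the latest at level `0`, at a hierarchical B-spline. For the finer mesh the
hypothesis `supp β ⊄ Ω∘^{k+1}` implies `supp β ⊄ Ω•^{k+1}`, which starts the climb. -/

section HierarchicalBasis

variable {X Spline : Type} (supp : Spline → Set X) (B : ℕ → Set Spline) (Ω : ℕ → Set X)

def hierarchicalBasis : Set Spline :=
  {β | ∃ k, β ∈ B k ∧ supp β ⊆ Ω k ∧ ¬ supp β ⊆ Ω (k + 1)}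

variable {supp B Ω}

theorem exists_mem_hierarchicalBasis_supp_subset (hΩ0 : Ω 0 = Set.univ)
    (hcoarse : ∀ k, ∀ β ∈ B (k + 1), ∃ β' ∈ B k, supp β ⊆ supp β') :
    ∀ k, ∀ β ∈ B k, ¬ supp β ⊆ Ω (k + 1) →
      ∃ β' ∈ hierarchicalBasis supp B Ω, supp β ⊆ supp β' := by
  intro k
  induction k with
  | zero =>
    intro β hβ hleaves
    exact ⟨β, ⟨0, hβ, hΩ0 ▸ Set.subset_univ _, hleaves⟩, subset_rfl⟩
  | succ k ih =>
    intro β hβ hleaves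
    by_cases hinside : supp β ⊆ Ω (k + 1)
    · exact ⟨β, ⟨k + 1, hβ, hinside, hleaves⟩, subset_rfl⟩
    · obtain ⟨β'', hβ'', hsub⟩ := hcoarse k β hβ
      obtain ⟨β', hβ', hsub'⟩ := ih β'' hβ'' fun h => hinside (hsub.trans h)
      exact ⟨β', hβ', hsub.trans hsub'⟩

end HierarchicalBasis

theorem support_monotonicity_general {X Spline : Type}
    (supp : Spline → Set X)
    (B : ℕ → Set Spline)                 -- the nested tensor-product B-spline bases `B̂^k`
    (Ωb Ωo : ℕ → Set X)                  -- domain hierarchies of `T̂_•` and `T̂_∘`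
    (hb0 : Ωb 0 = Set.univ)
    -- `T̂_∘` is finer than `T̂_•`:
    (hfiner : ∀ k, Ωb k ⊆ Ωo k)
    -- every level-`(k+1)` B-spline has its support inside the support of some
    -- level-`k` B-spline:
    (hcoarse : ∀ k, ∀ β ∈ B (k + 1), ∃ β' ∈ B k, supp β ⊆ supp β') :
    ∀ β : Spline,
      (∃ k, β ∈ B k ∧ supp β ⊆ Ωo k ∧ ¬ supp β ⊆ Ωo (k + 1)) →
      ∃ β' : Spline,
        (∃ k, β' ∈ B k ∧ supp β' ⊆ Ωb k ∧ ¬ supp β' ⊆ Ωb (k + 1)) ∧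
        supp β ⊆ supp β' := by
  rintro β ⟨k, hβ, -, hleaves⟩
  exact exists_mem_hierarchicalBasis_supp_subset hb0 hcoarse k β hβ
    fun h => hleaves (h.trans (hfiner (k + 1)))

theorem support_monotonicity {X Spline : Type}
    (supp : Spline → Set X)
    (B : ℕ → Set Spline)                 -- the nested tensor-product B-spline bases `B̂^k`
    (Ωb Ωo : ℕ → Set X)                  -- domain hierarchies of `T̂_•` and `T̂_∘`
    (hb0 : Ωb 0 = Set.univ)
    (hbdec : ∀ k, Ωb (k + 1) ⊆ Ωb k)
    (hodec : ∀ k, Ωo (k + 1) ⊆ Ωo k)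
    -- `T̂_∘` is finer than `T̂_•`:
    (hfiner : ∀ k, Ωb k ⊆ Ωo k)
    -- every level-`(k+1)` B-spline has its support inside the support of some
    -- level-`k` B-spline:
    (hcoarse : ∀ k, ∀ β ∈ B (k + 1), ∃ β' ∈ B k, supp β ⊆ supp β') :
    ∀ β : Spline,
      (∃ k, β ∈ B k ∧ supp β ⊆ Ωo k ∧ ¬ supp β ⊆ Ωo (k + 1)) →
      ∃ β' : Spline,
        (∃ k, β' ∈ B k ∧ supp β' ⊆ Ωb k ∧ ¬ supp β' ⊆ Ωb (k + 1)) ∧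
        supp β ⊆ supp β' :=
  support_monotonicity_general supp B Ωb Ωo hb0 hfiner hcoarse
end

section
/- Let T̂_• be an admissible hierarchical mesh and β̂ ∈ Ĥ_• with level k. Then the full truncation stabilizes after one step: Trunc_•(β̂) = trunc_•^{k+1}(β̂), i.e., for all k'' > k+1 and the two-scale representation trunc_•^{k+1}(β̂) = Σ_{β̂''∈B̂^{k''}} c_{β̂''} β̂'', every β̂'' with supp(β̂'') ⊆ Ω̂_•^{k''} has coefficient c_{β̂''} = 0. -/
theorem truncation_stabilizes_general {X Spline : Type}
    (supp : Spline → Set X)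
    (B : ℕ → Set Spline)                 -- the tensor-product B-spline bases `B̂^{k''}`
    (Ω : ℕ → Set X)                      -- the domain hierarchy `Ω̂_•^k`
    (Tmesh : Set (Set X)) (lev : Set X → ℕ)
    (β : Spline) (k : ℕ)
    (c : ℕ → Spline → ℝ)                 -- coefficients of `trunc_•^{k+1}(β̂)` in `B̂^{k''}`
    -- coefficient–support inclusion:
    (hsuppincl : ∀ k'' : ℕ, ∀ β'' ∈ B k'', c k'' β'' ≠ 0 → supp β'' ⊆ supp β)
    -- a fine B-spline with support inside `Ω̂^{k''}` contains an active element of level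
    -- at least `k''`:
    (hactive : ∀ k'' : ℕ, ∀ β'' ∈ B k'', supp β'' ⊆ Ω k'' →
        ∃ T ∈ Tmesh, k'' ≤ lev T ∧ T ⊆ supp β'')
    -- admissibility + level characterization: active elements inside `supp β̂` have
    -- level at most `k + 1`:
    (hadm : ∀ T ∈ Tmesh, T ⊆ supp β → lev T ≤ k + 1) :
    ∀ k'' : ℕ, k + 1 < k'' → ∀ β'' ∈ B k'', supp β'' ⊆ Ω k'' → c k'' β'' = 0 := by
  intro k'' hk β'' hβ'' hsupp
  by_contra hc
  -- An active element of level `≥ k'' > k + 1` would lie inside `supp β̂`.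
  obtain ⟨T, hT, hlev, hTβ''⟩ := hactive k'' β'' hβ'' hsupp
  have hTβ : T ⊆ supp β := hTβ''.trans (hsuppincl k'' β'' hβ'' hc)
  have := hadm T hT hTβ
  omega

theorem truncation_stabilizes {X Spline : Type}
    (supp : Spline → Set X)
    (B : ℕ → Set Spline)                 -- the tensor-product B-spline bases `B̂^{k''}`
    (Ω : ℕ → Set X)                      -- the domain hierarchy `Ω̂_•^k`
    (Tmesh : Set (Set X)) (lev : Set X → ℕ)
    (β : Spline) (k : ℕ) (hβ : β ∈ B k)  -- `β̂ ∈ Ĥ_•` of level `k`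
    (c : ℕ → Spline → ℝ)                 -- coefficients of `trunc_•^{k+1}(β̂)` in `B̂^{k''}`
    -- coefficient–support inclusion:
    (hsuppincl : ∀ k'' : ℕ, ∀ β'' ∈ B k'', c k'' β'' ≠ 0 → supp β'' ⊆ supp β)
    -- a fine B-spline with support inside `Ω̂^{k''}` contains an active element of level
    -- at least `k''`:
    (hactive : ∀ k'' : ℕ, ∀ β'' ∈ B k'', supp β'' ⊆ Ω k'' →
        ∃ T ∈ Tmesh, k'' ≤ lev T ∧ T ⊆ supp β'')
    -- admissibility + level characterization: active elements inside `supp β̂` have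
    -- level at most `k + 1`:
    (hadm : ∀ T ∈ Tmesh, T ⊆ supp β → lev T ≤ k + 1) :
    ∀ k'' : ℕ, k + 1 < k'' → ∀ β'' ∈ B k'', supp β'' ⊆ Ω k'' → c k'' β'' = 0 :=
  truncation_stabilizes_general supp B Ω Tmesh lev β k c hsuppincl hactive hadm
end
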